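/- arXiv:2111.07004 — 3 statements merged into one kernel-verified Lean document; each statement's English description precedes it below -/
import Mathlib

section
/- If A and B are symmetric positive definite real n×n matrices, then (A+B)⁻¹ > A⁻¹ − A⁻¹BA⁻¹ strictly in the Loewner order. -/
open Matrix

lemma posDef_conj_aux {n : ℕ} {M C : Matrix (Fin n) (Fin n) ℝ}
    (hM : M.PosDef) (hC : IsUnit C) : (Cᵀ * M * C).PosDef := by
  refine Matrix.posDef_iff_dotProduct_mulVec.2 ⟨?_, fun x hx => ?_⟩
  · have h := hM.isHermitian.eq
    simp only [Matrix.IsHermitian, Matrix.conjTranspose_mul]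
    rw [Matrix.conjTranspose_eq_transpose_of_trivial,
      Matrix.conjTranspose_eq_transpose_of_trivial,
      Matrix.conjTranspose_eq_transpose_of_trivial] at *
    simp [h, Matrix.mul_assoc]
  · have hCx : C *ᵥ x ≠ 0 := fun h => hx <|
      Matrix.mulVec_injective_iff_isUnit.2 hC (by simpa using h)
    have := (Matrix.posDef_iff_dotProduct_mulVec.1 hM).2 (x := C *ᵥ x) hCx
    rw [Matrix.mul_assoc, ← Matrix.mulVec_mulVec, Matrix.dotProduct_mulVec,
      Matrix.vecMul_transpose, ← Matrix.mulVec_mulVec]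
    simpa using this

/-- Lemma 3 (Kluge et al.): for symmetric positive definite real matrices `A`, `B`,
`(A + B)⁻¹ > A⁻¹ - A⁻¹ B A⁻¹` in the Loewner order, i.e. the difference is positive definite. -/
theorem inv_add_gt_inv_sub_inv_mul_inv (n : ℕ) (A B : Matrix (Fin n) (Fin n) ℝ)
    (hA : A.PosDef) (hB : B.PosDef) :
    ((A + B)⁻¹ - (A⁻¹ - A⁻¹ * B * A⁻¹)).PosDef := by
  have hS : (A + B).PosDef := hA.add hB
  have hAd : IsUnit A.det := (Matrix.isUnit_iff_isUnit_det A).1 hA.isUnit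
  have hSd : IsUnit (A + B).det := (Matrix.isUnit_iff_isUnit_det _).1 hS.isUnit
  have hA1 : A * A⁻¹ = 1 := Matrix.mul_nonsing_inv A hAd
  have hA1' : A⁻¹ * A = 1 := Matrix.nonsing_inv_mul A hAd
  have hS1 : (A + B) * (A + B)⁻¹ = 1 := Matrix.mul_nonsing_inv _ hSd
  have hS1' : (A + B)⁻¹ * (A + B) = 1 := Matrix.nonsing_inv_mul _ hSd
  have e1 : A⁻¹ * B * (A + B)⁻¹ = A⁻¹ - (A + B)⁻¹ := by
    have : A⁻¹ * B = A⁻¹ * (A + B) - 1 := by rw [mul_add, hA1']; abel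
    rw [this, sub_mul, one_mul, Matrix.mul_assoc, hS1, mul_one]
  have e2 : (A + B)⁻¹ * B * A⁻¹ = A⁻¹ - (A + B)⁻¹ := by
    have : (A + B)⁻¹ * B = 1 - (A + B)⁻¹ * A := by
      rw [← hS1', ← mul_sub]; congr 1; abel
    rw [this, sub_mul, one_mul, Matrix.mul_assoc, hA1, mul_one]
  have hAt : A⁻¹ᵀ = A⁻¹ := by
    rw [Matrix.transpose_nonsing_inv]
    congr 1
    rw [← Matrix.conjTranspose_eq_transpose_of_trivial, hA.isHermitian.eq]
  have hBt : Bᵀ = B := by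
    rw [← Matrix.conjTranspose_eq_transpose_of_trivial, hB.isHermitian.eq]
  have key : (A + B)⁻¹ - (A⁻¹ - A⁻¹ * B * A⁻¹)
      = (B * A⁻¹)ᵀ * (A + B)⁻¹ * (B * A⁻¹) := by
    rw [Matrix.transpose_mul, hAt, hBt]
    symm
    calc A⁻¹ * B * (A + B)⁻¹ * (B * A⁻¹)
        = (A⁻¹ - (A + B)⁻¹) * (B * A⁻¹) := by rw [e1]
      _ = A⁻¹ * (B * A⁻¹) - (A + B)⁻¹ * B * A⁻¹ := by rw [sub_mul, Matrix.mul_assoc]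
      _ = (A + B)⁻¹ - (A⁻¹ - A⁻¹ * B * A⁻¹) := by rw [e2, ← Matrix.mul_assoc]; abel
  rw [key]
  exact posDef_conj_aux hS.inv (hB.isUnit.mul hA.inv.isUnit)
end

section
/- Let A, H, E, F be real matrices of compatible dimensions with F Fᵀ ≤ I (Loewner order), let X be symmetric positive definite, and let γ > 0 satisfy γ⁻¹ I − E X Eᵀ positive definite. Then (A + H F E) X (A + H F E)ᵀ ≤ A (X⁻¹ − γ Eᵀ E)⁻¹ Aᵀ + γ⁻¹ H Hᵀ in the Loewner order. -/
/-!
Woodbury's identity rewrites `(X⁻¹ - γ EᵀE)⁻¹` as `X + X Eᵀ R⁻¹ E X` with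
`R = γ⁻¹ I - E X Eᵀ`. Completing the square in the uncertainty `F` then exhibits the gap
between the two sides as `G R Gᵀ + γ⁻¹ H (I - F Fᵀ) Hᵀ` with `G = A X Eᵀ R⁻¹ - H F`,
a sum of two positive semidefinite congruences.
-/

open Matrix

namespace Matrix

variable {m n p q K : Type*}

theorem inv_sub_smul_transpose_mul_self [Fintype n] [DecidableEq n] [Fintype q] [DecidableEq q]
    [Field K] {X : Matrix n n K} (E : Matrix q n K) {γ : K} (hγ : γ ≠ 0) (hX : IsUnit X)
    (hR : IsUnit (γ⁻¹ • (1 : Matrix q q K) - E * X * Eᵀ)) :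
    (X⁻¹ - γ • (Eᵀ * E))⁻¹ = X + X * Eᵀ * (γ⁻¹ • 1 - E * X * Eᵀ)⁻¹ * E * X := by
  have hX' : IsUnit X.det := (isUnit_iff_isUnit_det X).mp hX
  have hγ1 : IsUnit (γ • 1 : Matrix q q K) := (isUnit_iff_isUnit_det _).mpr (by simp [hγ])
  have hγ1inv : (γ • 1 : Matrix q q K)⁻¹ = γ⁻¹ • 1 :=
    inv_eq_left_inv (by rw [smul_mul_smul, one_mul, inv_mul_cancel₀ hγ, one_smul])
  -- Woodbury with `U = -Eᵀ`, `C = γ • 1`, `V = E`: the capacitance matrix is then exactly `R`.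
  have hsplit : X⁻¹ - γ • (Eᵀ * E) = X⁻¹ + (-Eᵀ) * (γ • 1 : Matrix q q K) * E := by
    rw [Matrix.neg_mul, Matrix.mul_smul, Matrix.mul_one, Matrix.neg_mul, Matrix.smul_mul,
      ← sub_eq_add_neg]
  have hcap : (γ • 1 : Matrix q q K)⁻¹ + E * X⁻¹⁻¹ * -Eᵀ = γ⁻¹ • 1 - E * X * Eᵀ := by
    rw [hγ1inv, nonsing_inv_nonsing_inv X hX', Matrix.mul_neg, ← sub_eq_add_neg]
  rw [hsplit, add_mul_mul_inv_eq_sub _ _ _ _ (isUnit_nonsing_inv_iff.mpr hX) hγ1 (hcap ▸ hR),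
    hcap, nonsing_inv_nonsing_inv X hX']
  simp only [Matrix.mul_neg, Matrix.neg_mul, sub_neg_eq_add]

theorem mul_inv_sub_mul_mul_transpose [Fintype q] [DecidableEq q] [CommRing K]
    {R : Matrix q q K} (hR : IsUnit R) (hRt : Rᵀ = R) (U V : Matrix m q K) :
    (U * R⁻¹ - V) * R * (U * R⁻¹ - V)ᵀ = U * R⁻¹ * Uᵀ - U * Vᵀ - V * Uᵀ + V * R * Vᵀ := by
  have hR' : IsUnit R.det := (isUnit_iff_isUnit_det R).mp hR
  simp only [transpose_sub, transpose_mul, transpose_nonsing_inv, hRt, Matrix.sub_mul,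
    Matrix.mul_sub, Matrix.mul_assoc, nonsing_inv_mul_cancel_left R _ hR',
    mul_nonsing_inv_cancel_left R _ hR']
  abel

theorem woodbury_gap_eq_square_add [Fintype n] [Fintype p] [DecidableEq p] [Fintype q]
    [DecidableEq q] [CommRing K] (A : Matrix m n K) (H : Matrix m p K) (F : Matrix p q K)
    (E : Matrix q n K) {X : Matrix n n K} (hX : Xᵀ = X) (c : K)
    (hR : IsUnit (c • (1 : Matrix q q K) - E * X * Eᵀ)) :
    A * (X + X * Eᵀ * (c • 1 - E * X * Eᵀ)⁻¹ * E * X) * Aᵀ + c • (H * Hᵀ)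
        - (A + H * F * E) * X * (A + H * F * E)ᵀ
      = (A * X * Eᵀ * (c • 1 - E * X * Eᵀ)⁻¹ - H * F) * (c • 1 - E * X * Eᵀ)
          * (A * X * Eᵀ * (c • 1 - E * X * Eᵀ)⁻¹ - H * F)ᵀ
        + c • (H * (1 - F * Fᵀ) * Hᵀ) := by
  have hRt : (c • (1 : Matrix q q K) - E * X * Eᵀ)ᵀ = c • 1 - E * X * Eᵀ := by
    rw [transpose_sub, transpose_smul, transpose_one, transpose_mul, transpose_mul,
      transpose_transpose, hX, Matrix.mul_assoc]
  rw [mul_inv_sub_mul_mul_transpose hR hRt]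
  simp only [transpose_add, transpose_mul, transpose_transpose, hX, Matrix.mul_add,
    Matrix.add_mul, Matrix.mul_sub, Matrix.sub_mul, Matrix.mul_assoc, Matrix.mul_smul,
    Matrix.smul_mul, Matrix.mul_one, smul_sub]
  abel

end Matrix

/-- Lemma 2 (Xie et al. 1994): if `F Fᵀ ≤ I`, `X` is symmetric positive definite and
`γ > 0` satisfies `γ⁻¹ I - E X Eᵀ > 0`, then
`(A + H F E) X (A + H F E)ᵀ ≤ A (X⁻¹ - γ Eᵀ E)⁻¹ Aᵀ + γ⁻¹ H Hᵀ` in the Loewner order. -/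
theorem xie_robust_bound (m n p q : ℕ)
    (A : Matrix (Fin m) (Fin n) ℝ) (H : Matrix (Fin m) (Fin p) ℝ)
    (F : Matrix (Fin p) (Fin q) ℝ) (E : Matrix (Fin q) (Fin n) ℝ)
    (X : Matrix (Fin n) (Fin n) ℝ) (γ : ℝ)
    (hF : ((1 : Matrix (Fin p) (Fin p) ℝ) - F * Fᵀ).PosSemidef)
    (hX : X.PosDef) (hγ : 0 < γ)
    (hγE : (γ⁻¹ • (1 : Matrix (Fin q) (Fin q) ℝ) - E * X * Eᵀ).PosDef) :
    (A * (X⁻¹ - γ • (Eᵀ * E))⁻¹ * Aᵀ + γ⁻¹ • (H * Hᵀ)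
      - (A + H * F * E) * X * (A + H * F * E)ᵀ).PosSemidef := by
  have hXt : Xᵀ = X := by simpa using hX.isHermitian.eq
  rw [inv_sub_smul_transpose_mul_self E hγ.ne' hX.isUnit hγE.isUnit,
    woodbury_gap_eq_square_add A H F E hXt _ hγE.isUnit]
  have hsquare := hγE.posSemidef.mul_mul_conjTranspose_same
    (A * X * Eᵀ * (γ⁻¹ • 1 - E * X * Eᵀ)⁻¹ - H * F)
  have hdefect := (hF.mul_mul_conjTranspose_same H).smul (inv_nonneg.mpr hγ.le)
  rw [conjTranspose_eq_transpose_of_trivial] at hsquare hdefect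
  exact hsquare.add hdefect
end

section
/- A 3rd-degree exactness property of the symmetric 2n-point rule: for any polynomial φ : ℝⁿ → ℝ of total degree at most 3, the equal-weight symmetric rule with nodes ±√n·eᵢ (eᵢ standard basis vectors) and weights 1/(2n) exactly integrates φ against the standard Gaussian: ∫_{ℝⁿ} φ(x) N(x; 0, I) dx = (1/(2n)) ∑_{i=1}^{n} [φ(√n eᵢ) + φ(−√n eᵢ)]. -/
/-!
Both sides are linear in `φ`, so it suffices to compare them on monomials `x^α` with
`|α| ≤ 3`. The Gaussian integral factorizes into one-dimensional moments `∏ᵢ m_{αᵢ}` with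
`m₀ = m₂ = 1` and `m₁ = m₃ = 0`, so it is `1` for `α = 0` or `α = 2eᵢ` and `0` otherwise (a
monomial of degree `≤ 3` that is neither has an exponent equal to `1`). At the nodes `±c eᵢ`,
`c² = n`, every monomial involving two variables vanishes, a pure power `xᵢ^k` contributes
`(cᵏ + (-c)ᵏ) / (2n)`, and the constant monomial gets `2n / (2n) = 1`: the same values.
-/

open MeasureTheory ProbabilityTheory Real MvPolynomial Finset

section GaussianMoments

variable {μ : ℝ} {v : NNReal}

lemma integrable_pow_gaussianReal (k : ℕ) :
    Integrable (fun x : ℝ => x ^ k) (gaussianReal μ v) :=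
  integrable_pow_of_mem_interior_integrableExpSet (X := id)
    (by simp [integrableExpSet_id_gaussianReal]) k

lemma integrable_gaussianPDFReal_mul_pow (hv : v ≠ 0) (k : ℕ) :
    Integrable fun x : ℝ => gaussianPDFReal μ v x * x ^ k := by
  have h := integrable_pow_gaussianReal (μ := μ) (v := v) k
  rw [gaussianReal_of_var_ne_zero μ hv, integrable_withDensity_iff_integrable_smul'
    (measurable_gaussianPDF μ v) (ae_of_all _ fun _ => gaussianPDF_lt_top)] at h
  simpa [toReal_gaussianPDF] using h

lemma integral_gaussianPDFReal_mul_pow (hv : v ≠ 0) (k : ℕ) :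
    ∫ x, gaussianPDFReal μ v x * x ^ k = ∫ x, x ^ k ∂gaussianReal μ v :=
  (integral_gaussianReal_eq_integral_smul hv).symm

lemma integral_pow_gaussianReal_of_odd {k : ℕ} (hk : Odd k) :
    ∫ x, x ^ k ∂gaussianReal 0 v = 0 := by
  have h : ∫ x, x ^ k ∂gaussianReal 0 v = ∫ x, (-x) ^ k ∂gaussianReal 0 v := by
    conv_lhs => rw [← neg_zero, ← gaussianReal_map_neg, integral_map (by fun_prop) (by fun_prop)]
  simp only [hk.neg_pow, integral_neg] at h
  linarith

lemma integral_sq_gaussianReal : ∫ x, x ^ 2 ∂gaussianReal 0 v = v := by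
  simpa [variance_eq_integral measurable_id'.aemeasurable] using
    (variance_fun_id_gaussianReal (μ := 0) (v := v))

end GaussianMoments

section ProductDensity

variable {ι : Type*} [Fintype ι]

theorem integral_eval_mul_prod_eq_sum (g : ℝ → ℝ) (hg : ∀ k : ℕ, Integrable fun t => g t * t ^ k)
    (φ : MvPolynomial ι ℝ) :
    ∫ y : ι → ℝ, eval y φ * ∏ i, g (y i)
      = ∑ α ∈ φ.support, coeff α φ * ∏ i, ∫ t, g t * t ^ α i := by
  have hexpand : ∀ y : ι → ℝ, eval y φ * ∏ i, g (y i)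
      = ∑ α ∈ φ.support, coeff α φ * ∏ i, g (y i) * y i ^ α i := fun y => by
    simp only [eval_eq', sum_mul, prod_mul_distrib]
    exact sum_congr rfl fun _ _ => by ring
  simp_rw [hexpand]
  rw [integral_finsetSum _ fun α _ => (Integrable.fintype_prod fun i => hg (α i)).const_mul _]
  refine sum_congr rfl fun α _ => ?_
  rw [integral_const_mul, integral_fintype_prod_volume_eq_prod (fun i t => g t * t ^ α i)]

lemma prod_gaussianPDFReal_eq (y : ι → ℝ) :
    ∏ i, gaussianPDFReal 0 1 (y i)
      = (2 * π) ^ (-(Fintype.card ι : ℝ) / 2) * exp (-‖WithLp.toLp 2 y‖ ^ 2 / 2) := by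
  simp only [gaussianPDFReal, prod_mul_distrib, prod_const, ← exp_sum,
    EuclideanSpace.real_norm_sq_eq]
  congr 1
  · rw [card_univ, NNReal.coe_one, mul_one, sqrt_eq_rpow, ← rpow_neg (by positivity),
      ← rpow_natCast, ← rpow_mul (by positivity)]
    congr 1
    ring
  · simp [sum_div, neg_div]

end ProductDensity

section CubatureNodes

variable {ι : Type*} [Fintype ι]

theorem sum_eval_eq_sum_support {R κ : Type*} [CommSemiring R] [Fintype κ]
    (p : κ → ι → R) (φ : MvPolynomial ι R) :
    ∑ l, eval (p l) φ = ∑ α ∈ φ.support, coeff α φ * ∑ l, ∏ i, p l i ^ α i := by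
  simp_rw [eval_eq', mul_sum]
  exact sum_comm

lemma prod_pow_finsuppSingle {M : Type*} [CommMonoid M] (f : ι → M) (l : ι) (k : ℕ) :
    ∏ i, f i ^ Finsupp.single l k i = f l ^ k := by
  rw [← Finsupp.prod_pow, Finsupp.prod_single_index (h := fun i e => f i ^ e) (pow_zero _)]

variable [DecidableEq ι]

lemma prod_single_pow_eq_zero {R : Type*} [CommMonoidWithZero R] {l j : ι} (c : R)
    (α : ι → ℕ) (hjl : j ≠ l) (hj : α j ≠ 0) :
    ∏ i, (Pi.single l c : ι → R) i ^ α i = 0 :=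
  prod_eq_zero (mem_univ j) (by rw [Pi.single_eq_of_ne hjl, zero_pow hj])

lemma eq_zero_or_eq_single_or_exists_one_of_sum_le_three (α : ι →₀ ℕ) (hα : ∑ i, α i ≤ 3) :
    α = 0 ∨ (∃ l k, 0 < k ∧ k ≤ 3 ∧ α = Finsupp.single l k) ∨
      ∃ i j, i ≠ j ∧ α i = 1 ∧ α j ≠ 0 := by
  by_cases h0 : α = 0
  · exact Or.inl h0
  obtain ⟨i, hi⟩ : ∃ i, α i ≠ 0 := not_forall.mp fun h => h0 (Finsupp.ext h)
  by_cases hsingle : ∀ j, j ≠ i → α j = 0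
  · refine Or.inr (Or.inl ⟨i, α i, Nat.pos_of_ne_zero hi, ?_, ?_⟩)
    · exact (single_le_sum (fun j _ => Nat.zero_le (α j)) (mem_univ i)).trans hα
    · ext j
      by_cases hji : j = i
      · subst hji; simp
      · simp [hsingle j hji, Finsupp.single_eq_of_ne hji]
  push Not at hsingle
  obtain ⟨j, hji, hj⟩ := hsingle
  have hpair : α i + α j ≤ 3 := by
    rw [← sum_pair hji.symm]
    exact (sum_le_sum_of_subset (subset_univ _)).trans hα
  rcases Nat.lt_or_ge (α i) 2 with hi1 | hi2
  · exact Or.inr (Or.inr ⟨i, j, hji.symm, by omega, hj⟩)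
  · exact Or.inr (Or.inr ⟨j, i, hji, by omega, hi⟩)

theorem prod_moments_eq_cubature [Nonempty ι] {M : ℕ → ℝ} (h0 : M 0 = 1) (h1 : M 1 = 0)
    (h2 : M 2 = 1) (h3 : M 3 = 0) {c : ℝ} (hc : c ^ 2 = Fintype.card ι) (α : ι →₀ ℕ)
    (hα : ∑ i, α i ≤ 3) :
    ∏ i, M (α i) = 1 / (2 * Fintype.card ι) *
      (∑ l, ∏ i, (Pi.single l c : ι → ℝ) i ^ α i +
        ∑ l, ∏ i, (Pi.single l (-c) : ι → ℝ) i ^ α i) := by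
  have hcard : (Fintype.card ι : ℝ) ≠ 0 := by positivity
  rcases eq_zero_or_eq_single_or_exists_one_of_sum_le_three α hα with
    rfl | ⟨l, k, hk0, hk3, rfl⟩ | ⟨i, j, hij, hi, hj⟩
  · simp only [Finsupp.coe_zero, Pi.zero_apply, h0, pow_zero, prod_const_one, sum_const,
      card_univ, nsmul_eq_mul, mul_one]
    field_simp
    ring
  · have hnode : ∀ d : ℝ,
        ∑ l', ∏ i, (Pi.single l' d : ι → ℝ) i ^ Finsupp.single l k i = d ^ k := fun d => by
      rw [sum_eq_single l
        (fun l' _ hl' => prod_single_pow_eq_zero d _ (Ne.symm hl') (by simp [hk0.ne']))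
        (by simp), prod_pow_finsuppSingle, Pi.single_eq_same]
    rw [prod_eq_single l (fun i _ hi => by rw [Finsupp.single_eq_of_ne hi, h0]) (by simp),
      hnode, hnode, Finsupp.single_eq_same]
    interval_cases k
    · rw [h1]; ring
    · rw [h2, neg_sq, hc]; field_simp; ring
    · rw [h3]; ring
  · have hnode : ∀ (d : ℝ) l, ∏ i, (Pi.single l d : ι → ℝ) i ^ α i = 0 := fun d l => by
      by_cases hil : i = l
      · exact prod_single_pow_eq_zero d α (hil ▸ hij.symm) hj
      · exact prod_single_pow_eq_zero d α hil (by omega)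
    rw [prod_eq_zero (mem_univ i) (by rw [hi, h1])]
    simp [hnode]

end CubatureNodes

/-- 3rd-degree exactness of the symmetric `2n`-point cubature rule underlying CNF-I / CKF:
for any polynomial `φ : ℝⁿ → ℝ` of total degree at most 3, the equal-weight rule with nodes
`±√n eᵢ` and weights `1/(2n)` exactly integrates `φ` against the standard Gaussian. -/
theorem third_degree_cubature_exact (n : ℕ) (hn : 1 ≤ n)
    (φ : MvPolynomial (Fin n) ℝ) (hφ : φ.totalDegree ≤ 3) :
    ∫ x : EuclideanSpace ℝ (Fin n),
        MvPolynomial.eval (fun i => x i) φ *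
          ((2 * Real.pi) ^ (-(n : ℝ) / 2) * Real.exp (-‖x‖ ^ 2 / 2))
      = (1 / (2 * (n : ℝ))) * ∑ i : Fin n,
          (MvPolynomial.eval (fun j => if j = i then Real.sqrt n else 0) φ
            + MvPolynomial.eval (fun j => if j = i then -Real.sqrt n else 0) φ) := by
  have : Nonempty (Fin n) := ⟨⟨0, hn⟩⟩
  have hnodes : ∀ (c : ℝ) (i : Fin n), (fun j => if j = i then c else 0) = Pi.single i c :=
    fun c i => funext fun j => (Pi.single_apply i c j).symm
  have hdegree : ∀ α ∈ φ.support, ∑ i, α i ≤ 3 := fun α hα =>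
    (Finsupp.sum_fintype α (fun _ e => e) fun _ => rfl).symm.trans_le
      ((le_totalDegree hα).trans hφ)
  calc _ = ∫ y : Fin n → ℝ, eval y φ * ∏ i, gaussianPDFReal 0 1 (y i) := by
        rw [← (EuclideanSpace.volume_preserving_symm_measurableEquiv_toLp
          (Fin n)).symm.integral_comp']
        simp [prod_gaussianPDFReal_eq]
    _ = ∑ α ∈ φ.support, coeff α φ * ∏ i, ∫ t, gaussianPDFReal 0 1 t * t ^ α i :=
        integral_eval_mul_prod_eq_sum _ (integrable_gaussianPDFReal_mul_pow one_ne_zero) φ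
    _ = ∑ α ∈ φ.support, coeff α φ * (1 / (2 * (n : ℝ)) *
          (∑ l, ∏ i, (Pi.single l √n : Fin n → ℝ) i ^ α i +
            ∑ l, ∏ i, (Pi.single l (-√n) : Fin n → ℝ) i ^ α i)) := by
        refine sum_congr rfl fun α hα => congrArg _ ?_
        simp only [integral_gaussianPDFReal_mul_pow one_ne_zero]
        have h := prod_moments_eq_cubature (M := fun k => ∫ t, t ^ k ∂gaussianReal 0 1)
          (by simp) (by simp) (by simp [integral_sq_gaussianReal])
          (integral_pow_gaussianReal_of_odd (by decide)) (c := √n) (by simp) α (hdegree α hα)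
        rwa [Fintype.card_fin] at h
    _ = _ := by
        simp only [hnodes]
        rw [sum_add_distrib, sum_eval_eq_sum_support, sum_eval_eq_sum_support, ← sum_add_distrib,
          mul_sum]
        exact sum_congr rfl fun α _ => by ring
end
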